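/- Let c > 0, k ∈ ℝ, and t ∈ ℝ with t ≠ 0. For either sign s ∈ {+1, −1} define, for r ≥ c^{1/4}, f₂(r) = √(r⁴ − c)·(−r² + s·√((1 + t²)·r⁴ + 16·k²·t²))/(4·r²·t). Then for all r ≥ c^{1/4}: 2·t·f₂(r)² + √(r⁴ − c)·f₂(r) + 2·t·(c·k²/r⁴ − r⁴/16) = (16·k² − c)·t/8, and f₂(c^{1/4}) = 0. -/

import Mathlib

/-- The explicit solution f₂ (with sign s) of the ω₂-dHYM equation on T*CP¹. -/
noncomputable def EHf2 (c k t s r : ℝ) : ℝ :=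
  Real.sqrt (r ^ 4 - c) *
    (-r ^ 2 + s * Real.sqrt ((1 + t ^ 2) * r ^ 4 + 16 * k ^ 2 * t ^ 2)) / (4 * r ^ 2 * t)

/-- the explicit ω₂-dHYM solutions on the Eguchi–Hanson space
satisfy the implicit quadratic identity and the boundary condition
f₂(c^{1/4}) = 0. -/
theorem dHYM_omega2_EguchiHanson_explicit_solutions
    (c k t : ℝ) (hc : 0 < c) (ht : t ≠ 0) (s : ℝ) (hs : s = 1 ∨ s = -1) :
    (∀ r : ℝ, c ^ ((1:ℝ)/4) ≤ r →
      2 * t * (EHf2 c k t s r) ^ 2 + Real.sqrt (r ^ 4 - c) * EHf2 c k t s r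
        + 2 * t * (c * k ^ 2 / r ^ 4 - r ^ 4 / 16) = (16 * k ^ 2 - c) * t / 8) ∧
    EHf2 c k t s (c ^ ((1:ℝ)/4)) = 0 := by
  have hq : (0:ℝ) < c ^ ((1:ℝ)/4) := Real.rpow_pos_of_pos hc _
  have h4 : (c ^ ((1:ℝ)/4)) ^ (4:ℕ) = c := by
    rw [← Real.rpow_natCast (c ^ ((1:ℝ)/4)) 4, ← Real.rpow_mul hc.le]
    norm_num
  have hs2 : s ^ 2 = 1 := by rcases hs with h | h <;> rw [h] <;> ring
  constructor
  · intro r hr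
    have hr0 : 0 < r := lt_of_lt_of_le hq hr
    have hrc : c ≤ r ^ 4 := by
      calc c = (c ^ ((1:ℝ)/4)) ^ (4:ℕ) := h4.symm
        _ ≤ r ^ 4 := by exact pow_le_pow_left₀ hq.le hr 4
    set A := Real.sqrt (r ^ 4 - c) with hA
    set B := Real.sqrt ((1 + t ^ 2) * r ^ 4 + 16 * k ^ 2 * t ^ 2) with hB
    have hA2 : A ^ 2 = r ^ 4 - c := Real.sq_sqrt (by linarith)
    have hB2 : B ^ 2 = (1 + t ^ 2) * r ^ 4 + 16 * k ^ 2 * t ^ 2 :=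
      Real.sq_sqrt (by positivity)
    unfold EHf2
    rw [← hA, ← hB]
    have hr4 : r ^ 4 ≠ 0 := by positivity
    have hr2 : r ^ 2 ≠ 0 := by positivity
    field_simp
    linear_combination (256) *
      ((s ^ 2 * B ^ 2 - r ^ 4) * hA2 + (r ^ 4 - c) * B ^ 2 * hs2 + (r ^ 4 - c) * hB2)
  · unfold EHf2
    have : (c ^ ((1:ℝ)/4)) ^ 4 - c = 0 := by rw [h4]; ring
    rw [this, Real.sqrt_zero]
    ring
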